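/- arXiv:2302.01202 — 4 statements merged into one kernel-verified Lean document; each statement's English description precedes it below -/
import Mathlib

section
/- Every torsion-free nilpotent group Γ is locally indicable: every nontrivial finitely generated subgroup of Γ admits a surjective group homomorphism onto ℤ. -/
open Function

/-- A group is locally indicable if every nontrivial finitely generated subgroup admits a
degree map, i.e. a surjective group homomorphism onto `ℤ`. -/
def LocallyIndicable (Γ : Type*) [Group Γ] : Prop :=
  ∀ H : Subgroup Γ, H.FG → H ≠ ⊥ →
    ∃ φ : H → ℤ, (∀ x y : H, φ (x * y) = φ x + φ y) ∧ Surjective φ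

/-!
Induct on the nilpotency class, passing from `G` to `G ⧸ center G`. The quotient is again
torsion-free by Mal'cev's lemma: if `x ^ n` commutes with `y`, descend along the iterated
commutators `cᵢ₊₁ = ⁅x, cᵢ⁆`, which vanish eventually; once `x` commutes with `cᵢ₊₁`, conjugation
by `x ^ n` multiplies `cᵢ` by `cᵢ₊₁ ^ n`, so `cᵢ₊₁ ^ n = 1` and `x` commutes with `cᵢ` too.
A nontrivial finitely generated subgroup `H` either lies in the centre, where it is free abelian
of positive rank and a coordinate function maps it onto `ℤ`, or has nontrivial image in the
quotient, whose map onto `ℤ` pulls back to `H`.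
-/

def Indicable (G : Type*) [Group G] : Prop :=
  ∃ φ : G → ℤ, (∀ x y : G, φ (x * y) = φ x + φ y) ∧ Surjective φ

theorem Subgroup.FG.map {G G' : Type*} [Group G] [Group G'] {H : Subgroup G} (h : H.FG)
    (f : G →* G') : (H.map f).FG := by
  classical
  obtain ⟨S, rfl⟩ := h
  exact ⟨S.image f, by rw [Finset.coe_image, MonoidHom.map_closure]⟩

theorem Indicable.of_surjective {G G' : Type*} [Group G] [Group G'] {f : G →* G'}
    (hf : Surjective f) (h : Indicable G') : Indicable G := by
  obtain ⟨φ, hφ, hsurj⟩ := h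
  exact ⟨φ ∘ f, fun x y => by simp only [comp_apply, map_mul, hφ], hsurj.comp hf⟩

theorem indicable_of_fg_of_isMulTorsionFree (A : Type*) [CommGroup A] [Group.FG A]
    [IsMulTorsionFree A] [Nontrivial A] : Indicable A := by
  have : Module.Finite ℤ (Additive A) :=
    Module.Finite.iff_addGroup_fg.mpr (GroupFG.iff_add_fg.mp inferInstance)
  let b := Module.Free.chooseBasis ℤ (Additive A)
  obtain ⟨i⟩ := b.index_nonempty
  refine ⟨fun a => b.coord i (Additive.ofMul a), fun x y => map_add _ _ _, fun n => ?_⟩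
  exact ⟨(n • b i).toMul, by simp⟩

theorem LocallyIndicable.of_subsingleton (G : Type*) [Group G] [Subsingleton G] :
    LocallyIndicable G :=
  fun H _ hne => absurd (Subsingleton.elim H ⊥) hne

theorem LocallyIndicable.of_quotient {G : Type*} [Group G] (N : Subgroup G) [N.Normal]
    (hQ : LocallyIndicable (G ⧸ N)) (hN : ∀ H ≤ N, H.FG → H ≠ ⊥ → Indicable H) :
    LocallyIndicable G := by
  intro H hfg hne
  by_cases hHN : H ≤ N
  · exact hN H hHN hfg hne
  let f := QuotientGroup.mk' N
  refine Indicable.of_surjective (f.subgroupMap_surjective H) (hQ (H.map f) (hfg.map f) ?_)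
  rwa [Ne, ← le_bot_iff, Subgroup.map_le_iff_le_comap, MonoidHom.comap_bot, QuotientGroup.ker_mk']

section TorsionFreeNilpotent

open scoped commutatorElement

variable {G : Type*} [Group G]

theorem Commute.commutatorElement_right {a x y : G} (hx : Commute a x) (hy : Commute a y) :
    Commute a ⁅x, y⁆ := by
  rw [commutatorElement_def]
  exact ((hx.mul_right hy).mul_right hx.inv_right).mul_right hy.inv_right

theorem conj_pow_eq_commutatorElement_pow_mul {x y : G} (h : Commute x ⁅x, y⁆) (m : ℕ) :
    x ^ m * y * (x ^ m)⁻¹ = ⁅x, y⁆ ^ m * y := by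
  induction m with
  | zero => simp
  | succ m ih =>
    have hconj : x * y * x⁻¹ = ⁅x, y⁆ * y := by rw [commutatorElement_def, inv_mul_cancel_right]
    calc x ^ (m + 1) * y * (x ^ (m + 1))⁻¹ = x * (x ^ m * y * (x ^ m)⁻¹) * x⁻¹ := by group
      _ = ⁅x, y⁆ ^ m * (x * y * x⁻¹) := by
        rw [ih, ← mul_assoc, (h.pow_right m).eq]; simp only [mul_assoc]
      _ = ⁅x, y⁆ ^ (m + 1) * y := by rw [hconj, pow_succ, mul_assoc]

theorem commutatorElement_eq_one_of_commute_pow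
    (htf : ∀ γ : G, ∀ n : ℕ, 0 < n → γ ^ n = 1 → γ = 1) {x y : G} {n : ℕ} (hn : 0 < n)
    (hxn : Commute (x ^ n) y) (h : Commute x ⁅x, y⁆) : ⁅x, y⁆ = 1 := by
  refine htf _ n hn ((mul_eq_right (b := y)).mp ?_)
  rw [← conj_pow_eq_commutatorElement_pow_mul h, hxn.eq, mul_inv_cancel_right]

theorem iterate_commutatorElement_mem_lowerCentralSeries (x y : G) (i : ℕ) :
    (fun z => ⁅x, z⁆)^[i] y ∈ (⊤ : Subgroup G).lowerCentralSeries i := by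
  induction i with
  | zero => exact Subgroup.mem_top y
  | succ i ih =>
    rw [iterate_succ_apply', Subgroup.lowerCentralSeries_succ, Subgroup.commutator_comm]
    exact Subgroup.commutator_mem_commutator (Subgroup.mem_top x) ih

theorem Commute.of_pow_left [Group.IsNilpotent G]
    (htf : ∀ γ : G, ∀ n : ℕ, 0 < n → γ ^ n = 1 → γ = 1) {x y : G} {n : ℕ} (hn : 0 < n)
    (h : Commute (x ^ n) y) : Commute x y := by
  set c : ℕ → G := fun i => (fun z => ⁅x, z⁆)^[i] y
  have hc_succ (i : ℕ) : c (i + 1) = ⁅x, c i⁆ := iterate_succ_apply' _ _ _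
  have hxn (i : ℕ) : Commute (x ^ n) (c i) := by
    induction i with
    | zero => exact h
    | succ i ih => rw [hc_succ]; exact ((Commute.refl x).pow_left n).commutatorElement_right ih
  obtain ⟨k, hk⟩ := Subgroup.nilpotent_iff_lowerCentralSeries.mp ‹Group.IsNilpotent G›
  have hck : c k = 1 := by
    simpa [hk] using iterate_commutatorElement_mem_lowerCentralSeries x y k
  refine Nat.decreasingInduction' (P := fun i => Commute x (c i)) (fun i _ _ ih => ?_)
    (Nat.zero_le k) (hck ▸ Commute.one_right x)
  rw [hc_succ] at ih
  exact commutatorElement_eq_one_iff_commute.mp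
    (commutatorElement_eq_one_of_commute_pow htf hn (hxn i) ih)

theorem torsionFree_quotient_center [Group.IsNilpotent G]
    (htf : ∀ γ : G, ∀ n : ℕ, 0 < n → γ ^ n = 1 → γ = 1) :
    ∀ γ : G ⧸ Subgroup.center G, ∀ n : ℕ, 0 < n → γ ^ n = 1 → γ = 1 := by
  intro γ n hn hγ
  induction γ using QuotientGroup.induction_on with | H g => ?_
  rw [← QuotientGroup.mk_pow, QuotientGroup.eq_one_iff, Subgroup.mem_center_iff] at hγ
  rw [QuotientGroup.eq_one_iff, Subgroup.mem_center_iff]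
  exact fun z => (Commute.of_pow_left htf hn (hγ z).symm).eq.symm

open scoped IsMulCommutative in
theorem indicable_of_le_center (htf : ∀ γ : G, ∀ n : ℕ, 0 < n → γ ^ n = 1 → γ = 1)
    {H : Subgroup G} (hH : H ≤ Subgroup.center G) (hfg : H.FG) (hne : H ≠ ⊥) : Indicable H := by
  have : IsMulCommutative H := Subgroup.le_centralizer_iff_isMulCommutative.mp
    (hH.trans (Subgroup.center_le_centralizer (H : Set G)))
  have : Group.FG H := (Group.fg_iff_subgroup_fg H).mpr hfg
  have : Nontrivial H := H.nontrivial_iff_ne_bot.mpr hne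
  have : IsMulTorsionFree H := IsMulTorsionFree.of_not_isOfFinOrder fun a ha hfin => by
    obtain ⟨n, hn, han⟩ := isOfFinOrder_iff_pow_eq_one.mp hfin
    exact ha (Subtype.ext (htf a n hn (by simpa using congrArg Subtype.val han)))
  exact indicable_of_fg_of_isMulTorsionFree H

end TorsionFreeNilpotent

/-- every torsion-free nilpotent group is locally indicable. -/
theorem locallyIndicable_of_torsionFree_nilpotent {Γ : Type*} [Group Γ]
    [Group.IsNilpotent Γ]
    (htf : ∀ γ : Γ, ∀ n : ℕ, 0 < n → γ ^ n = 1 → γ = 1) :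
    LocallyIndicable Γ := by
  revert htf
  refine Group.nilpotent_center_quotient_ind
    (P := fun G _ _ => (∀ γ : G, ∀ n : ℕ, 0 < n → γ ^ n = 1 → γ = 1) → LocallyIndicable G) Γ
    (fun G _ _ _ => LocallyIndicable.of_subsingleton G) fun G _ _ ih htf => ?_
  exact LocallyIndicable.of_quotient (Subgroup.center G) (ih (torsionFree_quotient_center htf))
    fun H hH => indicable_of_le_center htf hH
end

section
/- Let Γ be a torsion-free nilpotent group and σ a 2-cocycle on Γ. Then the twisted group ring ℂ(Γ,σ) contains no nontrivial zero divisors: for all finitely supported nonzero a, b : Γ → ℂ, the twisted convolution a *_σ b is nonzero. -/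
/-!
A torsion-free nilpotent group has unique products: its centre is torsion-free abelian, the
quotient by the centre is again torsion-free and of smaller nilpotency class, and unique products
pass to extensions, so induction on the class applies. At a uniquely represented product
`a₀ * b₀` of the supports of `a` and `b`, the twisted convolution has the single term
`σ a₀ b₀ * a a₀ * b b₀`, which is nonzero because `|σ| = 1`.
-/

open Function

/-- The `σ`-twisted convolution of two (finitely supported) functions `a b : Γ → ℂ`. -/
noncomputable def twConv {Γ : Type*} [Group Γ] (σ : Γ → Γ → ℂ) (a b : Γ → ℂ) : Γ → ℂ :=
  fun γ' => ∑ᶠ γ, σ γ (γ⁻¹ * γ') * a γ * b (γ⁻¹ * γ')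

/-- A 2-cocycle on a group `Γ`: unimodular values, cocycle identity, normalization. -/
def IsTwoCocycle {Γ : Type*} [Group Γ] (σ : Γ → Γ → ℂ) : Prop :=
  (∀ x y, ‖σ x y‖ = 1) ∧
    (∀ x y z, σ x y * σ (x * y) z = σ x (y * z) * σ y z) ∧ σ 1 1 = 1

open scoped commutatorElement

/-- Only nontrivial elements of finite order are excluded: for a noncommutative group this is
weaker than `IsMulTorsionFree`, which asks every `n`-th power map to be injective. -/
def Group.IsTorsionFree (G : Type*) [Group G] : Prop :=
  ∀ g : G, ∀ n : ℕ, 0 < n → g ^ n = 1 → g = 1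

section UniqueProds

variable {G : Type*} [Group G] {A B : Finset G} {a0 b0 : G}

theorem UniqueMul.of_image_mul_left_image_mul_right [DecidableEq G] (g h : G)
    (hu : UniqueMul (A.image (g * ·)) (B.image (· * h)) (g * a0) (b0 * h)) :
    UniqueMul A B a0 b0 := fun a b ha hb hab ↦ by
  simpa using hu (Finset.mem_image_of_mem _ ha) (Finset.mem_image_of_mem _ hb)
    (by rw [mul_assoc, mul_assoc, ← mul_assoc a, ← mul_assoc a0, hab])

theorem Subgroup.exists_uniqueMul_of_subset (H : Subgroup G) [UniqueProds H]
    (hA : A.Nonempty) (hB : B.Nonempty) (hAH : ∀ a ∈ A, a ∈ H) (hBH : ∀ b ∈ B, b ∈ H) :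
    ∃ a0 ∈ A, ∃ b0 ∈ B, UniqueMul A B a0 b0 := by
  classical
  obtain ⟨a, ha⟩ := hA
  obtain ⟨b, hb⟩ := hB
  obtain ⟨a0, ha0, b0, hb0, hu⟩ := UniqueProds.uniqueMul_of_nonempty
    ⟨⟨a, hAH a ha⟩, Finset.mem_subtype.mpr ha⟩ ⟨⟨b, hBH b hb⟩, Finset.mem_subtype.mpr hb⟩
  have := (UniqueMul.mulHom_map_iff (Embedding.subtype (· ∈ H)) fun _ _ ↦ rfl).mpr hu
  rw [Finset.subtype_map_of_mem hAH, Finset.subtype_map_of_mem hBH] at this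
  exact ⟨a0, Finset.mem_subtype.mp ha0, b0, Finset.mem_subtype.mp hb0, this⟩

/-- The fibres over a uniquely represented product in `G ⧸ N` are translates of subsets of `N`,
and translating does not affect unique representability. -/
theorem UniqueProds.of_normal_of_quotient (N : Subgroup G) [N.Normal]
    [UniqueProds N] [UniqueProds (G ⧸ N)] : UniqueProds G where
  uniqueMul_of_nonempty {A B} hA hB := by
    classical
    let π : G →ₙ* G ⧸ N := QuotientGroup.mk' N
    obtain ⟨_, hα, _, hβ, hu⟩ := uniqueMul_of_nonempty (hA.image π) (hB.image π)
    obtain ⟨α, hαA, rfl⟩ := Finset.mem_image.mp hα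
    obtain ⟨β, hβB, rfl⟩ := Finset.mem_image.mp hβ
    set A' := {a ∈ A | π a = π α}
    set B' := {b ∈ B | π b = π β}
    have hA' : ∀ c ∈ A'.image (α⁻¹ * ·), c ∈ N := by
      simp only [A', Finset.mem_image, Finset.mem_filter]
      rintro _ ⟨a, ⟨-, ha⟩, rfl⟩
      exact QuotientGroup.eq.mp ha.symm
    have hB' : ∀ d ∈ B'.image (· * β⁻¹), d ∈ N := by
      simp only [B', Finset.mem_image, Finset.mem_filter]
      rintro _ ⟨b, ⟨-, hb⟩, rfl⟩
      exact div_eq_mul_inv b β ▸ QuotientGroup.eq_iff_div_mem.mp hb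
    obtain ⟨_, hc, _, hd, hu'⟩ := N.exists_uniqueMul_of_subset
      (Finset.Nonempty.image ⟨α, by simp [A', hαA]⟩ _)
      (Finset.Nonempty.image ⟨β, by simp [B', hβB]⟩ _) hA' hB'
    obtain ⟨a0, ha0, rfl⟩ := Finset.mem_image.mp hc
    obtain ⟨b0, hb0, rfl⟩ := Finset.mem_image.mp hd
    refine ⟨a0, (Finset.mem_filter.mp ha0).1, b0, (Finset.mem_filter.mp hb0).1, ?_⟩
    exact UniqueMul.of_image_filter π (Finset.mem_filter.mp ha0).2 (Finset.mem_filter.mp hb0).2 hu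
      (UniqueMul.of_image_mul_left_image_mul_right _ _ hu')

end UniqueProds

/-- Two finite sets lie in a finitely generated subgroup, which is a free abelian group of finite
rank and so has unique products. -/
theorem UniqueProds.of_isMulTorsionFree {G : Type*} [CommGroup G] [IsMulTorsionFree G] :
    UniqueProds G where
  uniqueMul_of_nonempty {A B} hA hB := by
    classical
    let H := Subgroup.closure ((A ∪ B : Finset G) : Set G)
    exact H.exists_uniqueMul_of_subset hA hB
      (fun a ha ↦ Subgroup.subset_closure (by simp [ha]))
      (fun b hb ↦ Subgroup.subset_closure (by simp [hb]))

section Nilpotent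

variable {G : Type*} [Group G]

theorem commutatorElement_pow_left_of_commute {x g : G} (h : Commute x ⁅x, g⁆) (n : ℕ) :
    ⁅x ^ n, g⁆ = ⁅x, g⁆ ^ n := by
  induction n with
  | zero => simp
  | succ n ih =>
    calc ⁅x ^ (n + 1), g⁆ = x * ⁅x ^ n, g⁆ * x⁻¹ * ⁅x, g⁆ := by
          simp only [commutatorElement_def]; group
      _ = ⁅x, g⁆ ^ (n + 1) := by
          rw [ih, (h.pow_right n).eq, mul_inv_cancel_right, pow_succ]

open Subgroup

/-- Modulo `upperCentralSeries G i`, the commutator `⁅x, g⁆` is central, so its `n`-th power is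
`⁅x ^ n, g⁆`; induction on `i` applies to `⁅x, g⁆`. -/
theorem Subgroup.mem_upperCentralSeries_of_pow_mem_of_mem_succ (htf : Group.IsTorsionFree G)
    {n : ℕ} (hn : 0 < n) (i : ℕ) {x : G}
    (hx : x ∈ upperCentralSeries G (i + 1)) (hxn : x ^ n ∈ upperCentralSeries G i) :
    x ∈ upperCentralSeries G i := by
  induction i generalizing x with
  | zero => exact htf x n hn hxn
  | succ i ih =>
    refine mem_upperCentralSeries_succ_iff.mpr fun g ↦
      ih (mem_upperCentralSeries_succ_iff.mp hx g) ?_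
    let π := QuotientGroup.mk' (upperCentralSeries G i)
    have hcomm : Commute (π x) ⁅π x, π g⁆ := by
      rw [← map_commutatorElement]
      refine (commutatorElement_eq_one_iff_commute.mp ?_).symm
      rw [← map_commutatorElement, QuotientGroup.mk'_apply, QuotientGroup.eq_one_iff]
      exact mem_upperCentralSeries_succ_iff.mp (mem_upperCentralSeries_succ_iff.mp hx g) x
    rw [← QuotientGroup.eq_one_iff, ← QuotientGroup.mk'_apply, map_pow, map_commutatorElement,
      ← commutatorElement_pow_left_of_commute hcomm, ← map_pow, ← map_commutatorElement,
      QuotientGroup.mk'_apply, QuotientGroup.eq_one_iff]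
    exact mem_upperCentralSeries_succ_iff.mp hxn g

theorem Subgroup.mem_upperCentralSeries_of_pow_mem [Group.IsNilpotent G]
    (htf : Group.IsTorsionFree G) {n : ℕ} (hn : 0 < n) (i : ℕ) {x : G}
    (hxn : x ^ n ∈ upperCentralSeries G i) : x ∈ upperCentralSeries G i := by
  obtain ⟨c, hc⟩ := Group.IsNilpotent.nilpotent G
  suffices ∀ k, x ∈ upperCentralSeries G (i + k) → x ∈ upperCentralSeries G i from
    this c (upperCentralSeries_mono G (Nat.le_add_left c i) (hc ▸ mem_top x))
  intro k hk
  induction k with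
  | zero => exact hk
  | succ k ih =>
    exact ih (mem_upperCentralSeries_of_pow_mem_of_mem_succ htf hn (i + k) hk
      (upperCentralSeries_mono G (Nat.le_add_right i k) hxn))

theorem Group.IsTorsionFree.quotient_center [Group.IsNilpotent G] (htf : Group.IsTorsionFree G) :
    Group.IsTorsionFree (G ⧸ center G) := by
  intro q n hn hq
  induction q using QuotientGroup.induction_on with | H x => ?_
  rw [← QuotientGroup.mk_pow, QuotientGroup.eq_one_iff, ← Subgroup.upperCentralSeries_one] at hq
  rw [QuotientGroup.eq_one_iff, ← Subgroup.upperCentralSeries_one]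
  exact mem_upperCentralSeries_of_pow_mem htf hn 1 hq

open scoped IsMulCommutative in
theorem Group.IsTorsionFree.uniqueProds_center (htf : Group.IsTorsionFree G) :
    UniqueProds (center G) :=
  have : IsMulTorsionFree (center G) := IsMulTorsionFree.of_not_isOfFinOrder fun z hz hfin ↦ by
    obtain ⟨n, hn, hzn⟩ := isOfFinOrder_iff_pow_eq_one.mp hfin
    exact hz (Subtype.ext (htf z n hn (by simpa using congrArg Subtype.val hzn)))
  UniqueProds.of_isMulTorsionFree

theorem Group.IsTorsionFree.uniqueProds [Group.IsNilpotent G] (htf : Group.IsTorsionFree G) :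
    UniqueProds G := by
  revert htf
  refine Group.nilpotent_center_quotient_ind
    (P := fun G _ _ ↦ Group.IsTorsionFree G → UniqueProds G) G ?_ ?_
  · intro G _ _ _
    exact ⟨fun ⟨a, ha⟩ ⟨b, hb⟩ ↦ ⟨a, ha, b, hb, UniqueMul.of_subsingleton⟩⟩
  · intro G _ _ ih htf
    have := htf.uniqueProds_center
    have := ih htf.quotient_center
    exact UniqueProds.of_normal_of_quotient (center G)

end Nilpotent

theorem twConv_apply_mul_of_uniqueMul {Γ : Type*} [Group Γ] (σ : Γ → Γ → ℂ) {a b : Γ → ℂ}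
    (ha : (support a).Finite) (hb : (support b).Finite) {a0 b0 : Γ}
    (hu : UniqueMul ha.toFinset hb.toFinset a0 b0) :
    twConv σ a b (a0 * b0) = σ a0 b0 * a a0 * b b0 := by
  rw [twConv, finsum_eq_single _ a0, inv_mul_cancel_left]
  intro x hx
  by_contra hne
  have hxa : a x ≠ 0 := fun h ↦ hne (by simp [h])
  have hxb : b (x⁻¹ * (a0 * b0)) ≠ 0 := fun h ↦ hne (by simp [h])
  exact hx (hu (ha.mem_toFinset.mpr hxa) (hb.mem_toFinset.mpr hxb) (mul_inv_cancel_left _ _)).1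

/-- for a torsion-free nilpotent group `Γ` and any 2-cocycle `σ`, the twisted
group ring `ℂ(Γ,σ)` contains no nontrivial zero divisors. -/
theorem twConv_ne_zero_of_torsionFree_nilpotent {Γ : Type*} [Group Γ]
    [Group.IsNilpotent Γ]
    (htf : ∀ γ : Γ, ∀ n : ℕ, 0 < n → γ ^ n = 1 → γ = 1)
    (σ : Γ → Γ → ℂ) (hσ : IsTwoCocycle σ)
    (a b : Γ → ℂ) (ha : (support a).Finite) (hb : (support b).Finite)
    (ha0 : a ≠ 0) (hb0 : b ≠ 0) :
    twConv σ a b ≠ 0 := by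
  have hA : ha.toFinset.Nonempty := by simpa [Finset.nonempty_iff_ne_empty] using ha0
  have hB : hb.toFinset.Nonempty := by simpa [Finset.nonempty_iff_ne_empty] using hb0
  have : UniqueProds Γ := Group.IsTorsionFree.uniqueProds htf
  obtain ⟨a0, ha0A, b0, hb0B, hu⟩ := UniqueProds.uniqueMul_of_nonempty hA hB
  have hσ0 : σ a0 b0 ≠ 0 := norm_ne_zero_iff.mp (by simp [hσ.1 a0 b0])
  intro h
  have hval := twConv_apply_mul_of_uniqueMul σ ha hb hu
  rw [h] at hval
  exact mul_ne_zero (mul_ne_zero hσ0 (ha.mem_toFinset.mp ha0A)) (hb.mem_toFinset.mp hb0B) hval.symm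
end

section
/- Let d ≥ 1 and σ a 2-cocycle on ℤ^d. Call a finitely supported a : ℤ^d → ℂ non-negative if a(i_1,…,i_d) = 0 whenever some i_k < 0, and for nonzero non-negative a define deg(a) as the maximum of i_1 + ⋯ + i_d over (i_1,…,i_d) ∈ supp(a). Then for all nonzero non-negative finitely supported a, b : ℤ^d → ℂ, the twisted convolution a *_σ b is nonzero, non-negative, and deg(a *_σ b) = deg(a) + deg(b). -/
open Function

/-- The `σ`-twisted convolution on the (additive) group `ℤ^d`. -/
noncomputable def twConvZ {d : ℕ} (σ : (Fin d → ℤ) → (Fin d → ℤ) → ℂ)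
    (a b : (Fin d → ℤ) → ℂ) : (Fin d → ℤ) → ℂ :=
  fun m => ∑ᶠ k, σ k (m - k) * a k * b (m - k)

/-- A 2-cocycle on the additive group `ℤ^d`. -/
def IsTwoCocycleZ {d : ℕ} (σ : (Fin d → ℤ) → (Fin d → ℤ) → ℂ) : Prop :=
  (∀ x y, ‖σ x y‖ = 1) ∧
    (∀ x y z, σ x y * σ (x + y) z = σ x (y + z) * σ y z) ∧ σ 0 0 = 1

/-- `a : ℤ^d → ℂ` is non-negative if it vanishes at every point with a negative coordinate. -/
def NonNeg {d : ℕ} (a : (Fin d → ℤ) → ℂ) : Prop :=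
  ∀ m : Fin d → ℤ, (∃ i, m i < 0) → a m = 0

/-- `D` is the degree of `a`, i.e. the maximum of `i_1 + ⋯ + i_d` over the support of `a`. -/
def IsDegree {d : ℕ} (a : (Fin d → ℤ) → ℂ) (D : ℤ) : Prop :=
  IsGreatest ((fun m : Fin d → ℤ => ∑ i, m i) '' support a) D

/-! Non-negativity and the bound `deg (a *_σ b) ≤ deg a + deg b` hold term by term. For the
reverse bound: `ℤ^d` has unique sums, so the top-degree parts of `supp a` and `supp b` contain
`k₀`, `l₀` such that `k₀ + l₀` is the sum of no other pair from them; any other pair of support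
points has smaller total degree, so `(a *_σ b)(k₀ + l₀)` is the single term
`σ(k₀, l₀) a(k₀) b(l₀)`, which is nonzero as `|σ| = 1`. -/

section

variable {d : ℕ} {σ : (Fin d → ℤ) → (Fin d → ℤ) → ℂ} {a b : (Fin d → ℤ) → ℂ} {Da Db : ℤ}

lemma IsTwoCocycleZ.ne_zero (hσ : IsTwoCocycleZ σ) (x y : Fin d → ℤ) : σ x y ≠ 0 :=
  norm_ne_zero_iff.mp (by simp [hσ.1 x y])

lemma exists_ne_zero_of_twConvZ_ne_zero {m : Fin d → ℤ} (hm : twConvZ σ a b m ≠ 0) :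
    ∃ k, a k ≠ 0 ∧ b (m - k) ≠ 0 := by
  contrapose! hm
  refine finsum_eq_zero_of_forall_eq_zero fun k => ?_
  by_cases hk : a k = 0
  · simp [hk]
  · simp [hm k hk]

lemma NonNeg.twConvZ (haN : NonNeg a) (hbN : NonNeg b) : NonNeg (twConvZ σ a b) := by
  rintro m ⟨i, hi⟩
  refine finsum_eq_zero_of_forall_eq_zero fun k => ?_
  by_cases hk : k i < 0
  · simp [haN k ⟨i, hk⟩]
  · simp [hbN (m - k) ⟨i, by simp only [Pi.sub_apply]; omega⟩]

lemma twConvZ_add_of_unique {k₀ l₀ : Fin d → ℤ}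
    (huniq : ∀ k, a k ≠ 0 → b (k₀ + l₀ - k) ≠ 0 → k = k₀) :
    twConvZ σ a b (k₀ + l₀) = σ k₀ l₀ * a k₀ * b l₀ := by
  rw [twConvZ, finsum_eq_single _ k₀ fun k hk => ?_, add_sub_cancel_left]
  by_cases hak : a k = 0
  · simp [hak]
  · by_cases hbk : b (k₀ + l₀ - k) = 0
    · simp [hbk]
    · exact absurd (huniq k hak hbk) hk

namespace IsDegree

lemma sum_le (hDa : IsDegree a Da) {k : Fin d → ℤ} (hk : a k ≠ 0) : ∑ i, k i ≤ Da :=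
  hDa.2 ⟨k, hk, rfl⟩

lemma sum_eq_of_sum_add_eq (hDa : IsDegree a Da) (hDb : IsDegree b Db) {k l : Fin d → ℤ}
    (hk : a k ≠ 0) (hl : b l ≠ 0) (h : ∑ i, (k + l) i = Da + Db) :
    ∑ i, k i = Da ∧ ∑ i, l i = Db := by
  have hkl : ∑ i, (k + l) i = ∑ i, k i + ∑ i, l i := by simp [Finset.sum_add_distrib]
  have := hDa.sum_le hk
  have := hDb.sum_le hl
  omega

lemma sum_le_of_twConvZ_ne_zero (hDa : IsDegree a Da) (hDb : IsDegree b Db)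
    {m : Fin d → ℤ} (hm : twConvZ σ a b m ≠ 0) : ∑ i, m i ≤ Da + Db := by
  obtain ⟨k, hk, hmk⟩ := exists_ne_zero_of_twConvZ_ne_zero hm
  have hkl : ∑ i, m i = ∑ i, k i + ∑ i, (m - k) i := by simp
  have := hDa.sum_le hk
  have := hDb.sum_le hmk
  omega

lemma nonempty_filter (hDa : IsDegree a Da) (ha : (support a).Finite) :
    (ha.toFinset.filter fun k => ∑ i, k i = Da).Nonempty := by
  obtain ⟨k, hk, hkD⟩ := hDa.1
  exact ⟨k, Finset.mem_filter.2 ⟨ha.mem_toFinset.2 hk, hkD⟩⟩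

lemma exists_twConvZ_ne_zero (hσ : IsTwoCocycleZ σ) (ha : (support a).Finite)
    (hb : (support b).Finite) (hDa : IsDegree a Da) (hDb : IsDegree b Db) :
    ∃ m, twConvZ σ a b m ≠ 0 ∧ ∑ i, m i = Da + Db := by
  obtain ⟨k₀, hk₀, l₀, hl₀, huniq⟩ :=
    UniqueSums.uniqueAdd_of_nonempty (hDa.nonempty_filter ha) (hDb.nonempty_filter hb)
  simp only [Finset.mem_filter, Set.Finite.mem_toFinset, mem_support] at hk₀ hl₀
  have hlead : twConvZ σ a b (k₀ + l₀) = σ k₀ l₀ * a k₀ * b l₀ := by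
    refine twConvZ_add_of_unique fun k hk hl => ?_
    have hsum : ∑ i, (k + (k₀ + l₀ - k)) i = Da + Db := by
      simp [← hk₀.2, ← hl₀.2, Finset.sum_add_distrib]
    obtain ⟨hkD, hlD⟩ := hDa.sum_eq_of_sum_add_eq hDb hk hl hsum
    exact (huniq (Finset.mem_filter.2 ⟨ha.mem_toFinset.2 hk, hkD⟩)
      (Finset.mem_filter.2 ⟨hb.mem_toFinset.2 hl, hlD⟩) (add_sub_cancel k _)).1
  refine ⟨k₀ + l₀, ?_, by simp [← hk₀.2, ← hl₀.2, Finset.sum_add_distrib]⟩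
  rw [hlead]
  exact mul_ne_zero (mul_ne_zero (hσ.ne_zero k₀ l₀) hk₀.1) hl₀.1

end IsDegree

end

theorem twConvZ_nonneg_deg_general {d : ℕ}
    (σ : (Fin d → ℤ) → (Fin d → ℤ) → ℂ) (hσ : IsTwoCocycleZ σ)
    (a b : (Fin d → ℤ) → ℂ) (ha : (support a).Finite) (hb : (support b).Finite)
    (haN : NonNeg a) (hbN : NonNeg b)
    (Da Db : ℤ) (hDa : IsDegree a Da) (hDb : IsDegree b Db) :
    twConvZ σ a b ≠ 0 ∧ NonNeg (twConvZ σ a b) ∧ IsDegree (twConvZ σ a b) (Da + Db) := by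
  obtain ⟨m, hm, hmD⟩ := hDa.exists_twConvZ_ne_zero hσ ha hb hDb
  refine ⟨fun h => hm (by simp [h]), haN.twConvZ hbN, ⟨m, hm, hmD⟩, ?_⟩
  rintro _ ⟨n, hn, rfl⟩
  exact hDa.sum_le_of_twConvZ_ne_zero hDb hn

/-- for nonzero non-negative finitely supported `a b : ℤ^d → ℂ`, the twisted
convolution `a *_σ b` is nonzero, non-negative, and `deg(a *_σ b) = deg a + deg b`. -/
theorem twConvZ_nonneg_deg {d : ℕ} (hd : 1 ≤ d)
    (σ : (Fin d → ℤ) → (Fin d → ℤ) → ℂ) (hσ : IsTwoCocycleZ σ)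
    (a b : (Fin d → ℤ) → ℂ) (ha : (support a).Finite) (hb : (support b).Finite)
    (ha0 : a ≠ 0) (hb0 : b ≠ 0) (haN : NonNeg a) (hbN : NonNeg b)
    (Da Db : ℤ) (hDa : IsDegree a Da) (hDb : IsDegree b Db) :
    twConvZ σ a b ≠ 0 ∧ NonNeg (twConvZ σ a b) ∧ IsDegree (twConvZ σ a b) (Da + Db) :=
  twConvZ_nonneg_deg_general σ hσ a b ha hb haN hbN Da Db hDa hDb
end

section
/- Let G be a second-countable locally compact group with left Haar measure, σ a measurable 2-cocycle on G with |σ| ≡ 1, and Γ ≤ G a discrete subgroup with Borel fundamental domain Ω ⊆ G (so G is the disjoint union of the sets γΩ, γ ∈ Γ). Let H_Ω ⊆ L²(G) be the closed subspace of functions essentially supported in Ω, and let (e_i)_{i∈ℕ} be an orthonormal basis of H_Ω. Then the family (λ_G^σ(γ) e_i)_{γ∈Γ, i∈ℕ} is an orthonormal basis of L²(G). -/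
/-!
Left translation preserves Haar measure and `|σ| = 1`, so `λ^σ(γ)` preserves inner products; for
`γ ≠ γ'` the translates `λ^σ(γ) e_i` and `λ^σ(γ') e_j` live on the disjoint sets `γΩ` and `γ'Ω`.
For totality, orthogonality of `f` to all `λ^σ(γ) e_i` says that the pull-back
`y ↦ conj (σ γ y) * f (γ y)`, cut down to `Ω`, is orthogonal to the basis of `H_Ω`, hence vanishes;
so `f = 0` a.e. on each `γΩ`, and these countably many sets cover `G`.
-/

open MeasureTheory ComplexConjugate
open scoped Classical

theorem integral_conj_mul_eq_zero_of_disjoint {α : Type*} [MeasurableSpace α] {μ : Measure α}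
    {s t : Set α} (hst : Disjoint s t) {f g : α → ℂ}
    (hf : ∀ᵐ x ∂μ, x ∉ s → f x = 0) (hg : ∀ᵐ x ∂μ, x ∉ t → g x = 0) :
    ∫ x, conj (f x) * g x ∂μ = 0 := by
  have hzero : ∀ᵐ x ∂μ, conj (f x) * g x = 0 := by
    filter_upwards [hf, hg] with x hfx hgx
    by_cases hxs : x ∈ s
    · simp [hgx (Set.disjoint_left.mp hst hxs)]
    · simp [hfx hxs]
  rw [integral_congr_ae hzero, integral_zero]

theorem mem_image_mul_left_iff {G : Type*} [Group G] {g x : G} {Ω : Set G} :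
    x ∈ (fun y => g * y) '' Ω ↔ g⁻¹ * x ∈ Ω := by
  rw [Set.image_mul_left, Set.mem_preimage]

section TwistedTranslate

variable {G : Type*} [Group G] [MeasurableSpace G] [MeasurableMul G] {μ : Measure G}
  [μ.IsMulLeftInvariant]

/-- The twisted left-regular representation: `twistedTranslate σ g F = λ^σ(g) F`. -/
def twistedTranslate (σ : G → G → ℂ) (g : G) (F : G → ℂ) (x : G) : ℂ :=
  σ g (g⁻¹ * x) * F (g⁻¹ * x)

theorem integral_conj_twistedTranslate_mul (σ : G → G → ℂ) (g : G) (F f : G → ℂ) :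
    ∫ x, conj (twistedTranslate σ g F x) * f x ∂μ
      = ∫ y, conj (F y) * (conj (σ g y) * f (g * y)) ∂μ := by
  rw [← integral_mul_left_eq_self _ g]
  congr 1 with y
  simp only [twistedTranslate, inv_mul_cancel_left, map_mul]
  ring

theorem integral_conj_twistedTranslate_mul_twistedTranslate {σ : G → G → ℂ} {g : G}
    (hσ : ∀ y, ‖σ g y‖ = 1) (F H : G → ℂ) :
    ∫ x, conj (twistedTranslate σ g F x) * twistedTranslate σ g H x ∂μ
      = ∫ x, conj (F x) * H x ∂μ := by
  rw [integral_conj_twistedTranslate_mul]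
  congr 1 with y
  have hunit : conj (σ g y) * σ g y = 1 := by simp [Complex.conj_mul', hσ]
  simp only [twistedTranslate, inv_mul_cancel_left]
  linear_combination (conj (F y) * H y) * hunit

theorem twistedTranslate_ae_eq_zero_of_notMem_image (σ : G → G → ℂ) (g : G) {F : G → ℂ}
    {Ω : Set G} (hF : ∀ᵐ x ∂μ, x ∉ Ω → F x = 0) :
    ∀ᵐ x ∂μ, x ∉ (fun y => g * y) '' Ω → twistedTranslate σ g F x = 0 := by
  filter_upwards [(measurePreserving_mul_left μ g⁻¹).quasiMeasurePreserving.ae hF] with x hx hxΩ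
  rw [twistedTranslate, hx (mt mem_image_mul_left_iff.mpr hxΩ), mul_zero]

theorem MeasureTheory.MemLp.mul_comp_mul_left {p : ENNReal} {f c : G → ℂ} (hf : MemLp f p μ)
    (hc : Measurable c) {C : ℝ} (hcC : ∀ y, ‖c y‖ ≤ C) (g : G) :
    MemLp (fun y => c y * f (g * y)) p μ := by
  have hfg : MemLp (fun y => f (g * y)) p μ :=
    hf.comp_measurePreserving (measurePreserving_mul_left μ g)
  refine hfg.of_le_mul (c := C) (hc.aestronglyMeasurable.mul hfg.1) (.of_forall fun y => ?_)
  rw [norm_mul]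
  exact mul_le_mul_of_nonneg_right (hcC y) (norm_nonneg _)

theorem ae_eq_zero_on_image_of_orthogonal_twistedTranslate {ι : Type*} {σ : G → G → ℂ} {g : G}
    (hσmeas : Measurable (σ g)) (hσ : ∀ y, ‖σ g y‖ = 1) {Ω : Set G} (hΩ : MeasurableSet Ω)
    {e : ι → G → ℂ} (hesupp : ∀ i, ∀ᵐ x ∂μ, x ∉ Ω → e i x = 0)
    (hetotal : ∀ f : G → ℂ, MemLp f 2 μ → (∀ᵐ x ∂μ, x ∉ Ω → f x = 0) →
      (∀ i, ∫ x, conj (e i x) * f x ∂μ = 0) → f =ᵐ[μ] 0)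
    {f : G → ℂ} (hf : MemLp f 2 μ)
    (horth : ∀ i, ∫ x, conj (twistedTranslate σ g (e i) x) * f x ∂μ = 0) :
    ∀ᵐ x ∂μ, x ∈ (fun y => g * y) '' Ω → f x = 0 := by
  set pullback : G → ℂ := Ω.indicator fun y => conj (σ g y) * f (g * y)
  have hpullback : pullback =ᵐ[μ] 0 := by
    refine hetotal pullback ?_ ?_ fun i => ?_
    · exact (hf.mul_comp_mul_left (Complex.continuous_conj.measurable.comp hσmeas)
        (C := 1) (fun y => by simp [hσ]) g).indicator hΩ
    · exact Filter.Eventually.of_forall fun x hx => Set.indicator_of_notMem hx _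
    · rw [← horth i, integral_conj_twistedTranslate_mul]
      refine integral_congr_ae ?_
      filter_upwards [hesupp i] with y hy
      by_cases hyΩ : y ∈ Ω
      · simp [pullback, Set.indicator_of_mem hyΩ]
      · simp [hy hyΩ]
  have hvanish : ∀ᵐ y ∂μ, y ∈ Ω → f (g * y) = 0 := by
    filter_upwards [hpullback] with y hy hyΩ
    have hσy : conj (σ g y) ≠ 0 := by simp [← norm_ne_zero_iff, hσ]
    simpa [pullback, Set.indicator_of_mem hyΩ, hσy] using hy
  filter_upwards [(measurePreserving_mul_left μ g⁻¹).quasiMeasurePreserving.ae hvanish]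
    with x hx hxΩ
  simpa using hx (mem_image_mul_left_iff.mp hxΩ)

end TwistedTranslate

theorem twisted_translates_orthonormal_basis_general
    {G : Type*} [Group G] [TopologicalSpace G] [IsTopologicalGroup G]
    [SecondCountableTopology G]
    [MeasurableSpace G] [BorelSpace G]
    (μ : Measure G) [μ.IsHaarMeasure]
    (σ : G → G → ℂ) (hσmeas : Measurable fun p : G × G => σ p.1 p.2)
    (hσabs : ∀ x y, ‖σ x y‖ = 1)
    (Γ : Subgroup G) [DiscreteTopology Γ]
    (Ω : Set G) (hΩm : MeasurableSet Ω)
    (hdisj : Pairwise fun γ γ' : Γ =>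
      Disjoint ((fun x => (γ : G) * x) '' Ω) ((fun x => (γ' : G) * x) '' Ω))
    (hcover : (⋃ γ : Γ, (fun x => (γ : G) * x) '' Ω) = Set.univ)
    (e : ℕ → G → ℂ)
    (hesupp : ∀ i, ∀ᵐ x ∂μ, x ∉ Ω → e i x = 0)
    (heon : ∀ i j, ∫ x, (starRingEnd ℂ) (e i x) * e j x ∂μ = if i = j then 1 else 0)
    (hetotal : ∀ f : G → ℂ, MemLp f 2 μ → (∀ᵐ x ∂μ, x ∉ Ω → f x = 0) →
      (∀ i, ∫ x, (starRingEnd ℂ) (e i x) * f x ∂μ = 0) → f =ᵐ[μ] 0) :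
    (∀ (γ γ' : Γ) (i j : ℕ),
      ∫ x, (starRingEnd ℂ) (σ (γ : G) ((γ : G)⁻¹ * x) * e i ((γ : G)⁻¹ * x)) *
        (σ (γ' : G) ((γ' : G)⁻¹ * x) * e j ((γ' : G)⁻¹ * x)) ∂μ
        = if γ = γ' ∧ i = j then 1 else 0) ∧
    (∀ f : G → ℂ, MemLp f 2 μ →
      (∀ (γ : Γ) (i : ℕ),
        ∫ x, (starRingEnd ℂ) (σ (γ : G) ((γ : G)⁻¹ * x) * e i ((γ : G)⁻¹ * x)) * f x ∂μ = 0) →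
      f =ᵐ[μ] 0) := by
  refine ⟨fun γ γ' i j => ?_, fun f hf horth => ?_⟩
  · change ∫ x, conj (twistedTranslate σ γ (e i) x) * twistedTranslate σ γ' (e j) x ∂μ = _
    rcases eq_or_ne γ γ' with rfl | hγ
    · simp [integral_conj_twistedTranslate_mul_twistedTranslate (hσabs γ), heon]
    · rw [integral_conj_mul_eq_zero_of_disjoint (hdisj hγ)
        (twistedTranslate_ae_eq_zero_of_notMem_image σ γ (hesupp i))
        (twistedTranslate_ae_eq_zero_of_notMem_image σ γ' (hesupp j)), if_neg fun h => hγ h.1]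
  · have : Countable Γ := TopologicalSpace.separableSpace_iff_countable.mp inferInstance
    have hvanish : ∀ᵐ x ∂μ, ∀ γ : Γ, x ∈ (fun y => (γ : G) * y) '' Ω → f x = 0 :=
      ae_all_iff.mpr fun γ => ae_eq_zero_on_image_of_orthogonal_twistedTranslate
        (hσmeas.comp measurable_prodMk_left) (hσabs γ) hΩm hesupp hetotal hf (horth γ)
    filter_upwards [hvanish] with x hx
    obtain ⟨γ, hxγ⟩ := Set.mem_iUnion.mp (hcover.symm ▸ Set.mem_univ x)
    exact hx γ hxγ

/-- let `Γ ≤ G` be a discrete subgroup with Borel fundamental domain `Ω`, let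
`H_Ω ⊆ L²(G)` be the subspace of functions (essentially) supported in `Ω`, and let
`(e_i)_{i ∈ ℕ}` be an orthonormal basis of `H_Ω`. Then the twisted translates
`(λ_G^σ(γ) e_i)_{γ ∈ Γ, i ∈ ℕ}` form an orthonormal basis of `L²(G)`: they are orthonormal
and total. -/
theorem twisted_translates_orthonormal_basis
    {G : Type*} [Group G] [TopologicalSpace G] [IsTopologicalGroup G]
    [LocallyCompactSpace G] [SecondCountableTopology G]
    [MeasurableSpace G] [BorelSpace G]
    (μ : Measure G) [μ.IsHaarMeasure]
    (σ : G → G → ℂ) (hσmeas : Measurable fun p : G × G => σ p.1 p.2)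
    (hσabs : ∀ x y, ‖σ x y‖ = 1)
    (hσcoc : ∀ x y z, σ x y * σ (x * y) z = σ x (y * z) * σ y z)
    (hσe : σ 1 1 = 1)
    (Γ : Subgroup G) [DiscreteTopology Γ]
    (Ω : Set G) (hΩm : MeasurableSet Ω)
    (hdisj : Pairwise fun γ γ' : Γ =>
      Disjoint ((fun x => (γ : G) * x) '' Ω) ((fun x => (γ' : G) * x) '' Ω))
    (hcover : (⋃ γ : Γ, (fun x => (γ : G) * x) '' Ω) = Set.univ)
    (e : ℕ → G → ℂ) (he2 : ∀ i, MemLp (e i) 2 μ)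
    (hesupp : ∀ i, ∀ᵐ x ∂μ, x ∉ Ω → e i x = 0)
    (heon : ∀ i j, ∫ x, (starRingEnd ℂ) (e i x) * e j x ∂μ = if i = j then 1 else 0)
    (hetotal : ∀ f : G → ℂ, MemLp f 2 μ → (∀ᵐ x ∂μ, x ∉ Ω → f x = 0) →
      (∀ i, ∫ x, (starRingEnd ℂ) (e i x) * f x ∂μ = 0) → f =ᵐ[μ] 0) :
    (∀ (γ γ' : Γ) (i j : ℕ),
      ∫ x, (starRingEnd ℂ) (σ (γ : G) ((γ : G)⁻¹ * x) * e i ((γ : G)⁻¹ * x)) *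
        (σ (γ' : G) ((γ' : G)⁻¹ * x) * e j ((γ' : G)⁻¹ * x)) ∂μ
        = if γ = γ' ∧ i = j then 1 else 0) ∧
    (∀ f : G → ℂ, MemLp f 2 μ →
      (∀ (γ : Γ) (i : ℕ),
        ∫ x, (starRingEnd ℂ) (σ (γ : G) ((γ : G)⁻¹ * x) * e i ((γ : G)⁻¹ * x)) * f x ∂μ = 0) →
      f =ᵐ[μ] 0) :=
  twisted_translates_orthonormal_basis_general μ σ hσmeas hσabs Γ Ω hΩm hdisj hcover e hesupp heon
    hetotal
end
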